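/- arXiv:2006.09958 — 4 statements merged into one kernel-verified Lean document; each statement's English description precedes it below -/
import Mathlib

section
/- Let u be in the MRT class with associated sequences (t_m) and (s_m). Let (N_m) be an increasing sequence of positive integers with N_m ≤ t_{m+1} for each m. Then (1/N_m) · #{ n ∈ {1, …, N_m} : |u(n) − n^{i s_{m+1}}| > 1/t_m } ≤ ε_{t_m}, and this quantity tends to 0 as m → ∞, where ε_t := sup_{N ≥ 1} (1/N) · #{ 1 ≤ n ≤ N : Σ_{p ≤ t} α_p(n) ≥ t }. -/
open MeasureTheory Filter Topology

noncomputable section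

/-- The left shift on sequence space. -/
def shift : (ℕ → ℂ) → (ℕ → ℂ) := fun y n => y (n + 1)

/-- The point of `(S¹)^ℕ` associated with the arithmetic function `u` (indexed from 1). -/
def pt (u : ℕ → ℂ) : ℕ → ℂ := fun n => u (n + 1)

/-- `u` is a completely multiplicative function taking values in the unit circle, in the MRT
class with associated increasing sequences `t`, `s` of positive integers. -/
structure IsMRT (u : ℕ → ℂ) (t s : ℕ → ℕ) : Prop where
  norm_one : ∀ n, 1 ≤ n → ‖u n‖ = 1
  mult : ∀ m n, 1 ≤ m → 1 ≤ n → u (m * n) = u m * u n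
  t_mono : StrictMono t
  s_mono : StrictMono s
  t_pos : ∀ m, 1 ≤ t m
  s_pos : ∀ m, 1 ≤ s m
  t_lt_s : ∀ m, 1 ≤ m → t m < s (m + 1)
  s_lt_sq : ∀ m, 1 ≤ m → s (m + 1) < (s (m + 1)) ^ 2
  sq_le_t : ∀ m, 1 ≤ m → (s (m + 1)) ^ 2 ≤ t (m + 1)
  map_prime_big : ∀ m, 1 ≤ m → ∀ p : ℕ, p.Prime → t m < p → p ≤ t (m + 1) →
    u p = (p : ℂ) ^ ((s (m + 1) : ℂ) * Complex.I)
  map_prime_small : ∀ m, 1 ≤ m → ∀ p : ℕ, p.Prime → p ≤ t m →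
    ‖u p - (p : ℂ) ^ ((s (m + 1) : ℂ) * Complex.I)‖ < 1 / (t m : ℝ) ^ 2


/-- `B_t` is the set of positive integers having at least `t` prime factors less than or
equal to `t`, counted with multiplicity. -/
def Bset (t : ℕ) : Set ℕ :=
  {n : ℕ | t ≤ ∑ p ∈ Finset.filter Nat.Prime (Finset.range (t + 1)), n.factorization p}

/-- `ε_t = sup_{N ≥ 1} (1/N) Σ_{1 ≤ n ≤ N} 1_{B_t}(n)`. -/
def eps (t : ℕ) : ℝ :=
  ⨆ N : ℕ, (N : ℝ)⁻¹ * ∑ n ∈ Finset.Icc 1 N, (Bset t).indicator (fun _ => (1 : ℝ)) n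

/-!
Both `u` and `n ↦ n ^ (i s_{m+1})` are completely multiplicative with values on the unit circle,
so their distance at `n` is at most the sum, over the prime factorization of `n`, of their
distances at primes. For `n ≤ t_{m+1}` these vanish at primes above `t_m` and are below `1/t_m²`
at the others, so a distance above `1/t_m` forces `n` to have at least `t_m` prime factors
`≤ t_m`, i.e. `n ∈ B_{t_m}`. By Legendre, `∑_{n ≤ N} α_p(n) = α_p(N!) ≤ N/(p-1)`, so Markov's
inequality gives `ε_t ≤ t⁻¹ ∑_{p ≤ t} 1/(p-1) ≤ t⁻¹ ∑_{j ≤ t} 1/j`, a Cesàro mean tending to `0`.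
-/

open Finset

theorem norm_sub_le_factorization_sum {f g : ℕ → ℂ}
    (hf : ∀ n, n ≠ 0 → ‖f n‖ ≤ 1) (hg : ∀ n, n ≠ 0 → ‖g n‖ ≤ 1)
    (hf_mul : ∀ a b, a ≠ 0 → b ≠ 0 → f (a * b) = f a * f b)
    (hg_mul : ∀ a b, a ≠ 0 → b ≠ 0 → g (a * b) = g a * g b)
    (h_one : f 1 = g 1) {n : ℕ} (hn : n ≠ 0) :
    ‖f n - g n‖ ≤ n.factorization.sum fun p k => k * ‖f p - g p‖ := by
  induction n using Nat.recOnMul with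
  | zero => exact absurd rfl hn
  | one => simp [h_one]
  | prime p hp => simp [hp.factorization]
  | mul a b iha ihb =>
    have ha : a ≠ 0 := left_ne_zero_of_mul hn
    have hb : b ≠ 0 := right_ne_zero_of_mul hn
    calc ‖f (a * b) - g (a * b)‖ = ‖f a * (f b - g b) + (f a - g a) * g b‖ := by
          rw [hf_mul a b ha hb, hg_mul a b ha hb]; ring_nf
      _ ≤ ‖f b - g b‖ + ‖f a - g a‖ := by
          refine norm_add_le_of_le ?_ ?_ <;> rw [norm_mul]
          · exact mul_le_of_le_one_left (norm_nonneg _) (hf a ha)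
          · exact mul_le_of_le_one_right (norm_nonneg _) (hg b hb)
      _ ≤ (a * b).factorization.sum fun p k => k * ‖f p - g p‖ := by
          rw [Nat.factorization_mul ha hb, Finsupp.sum_add_index' (by simp) (by intros; push_cast; ring),
            add_comm (‖f b - g b‖)]
          exact add_le_add (iha ha) (ihb hb)

def smallOmega (t n : ℕ) : ℕ := ∑ p ∈ (range (t + 1)).filter Nat.Prime, n.factorization p

theorem factorization_sum_le_smallOmega_mul {t n : ℕ} {w : ℕ → ℝ} {c : ℝ}
    (hw : ∀ p ∈ n.primeFactors, w p ≤ if p ≤ t then c else 0) :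
    (n.factorization.sum fun p k => k * w p) ≤ smallOmega t n * c := by
  classical
  calc (n.factorization.sum fun p k => k * w p)
      ≤ ∑ p ∈ n.primeFactors, (n.factorization p : ℝ) * (if p ≤ t then c else 0) :=
        sum_le_sum fun p hp => mul_le_mul_of_nonneg_left (hw p hp) (Nat.cast_nonneg _)
    _ = ∑ p ∈ n.primeFactors.filter (· ≤ t), (n.factorization p : ℝ) * c := by
        simp only [mul_ite, mul_zero, sum_filter]
    _ = ∑ p ∈ (range (t + 1)).filter Nat.Prime, (n.factorization p : ℝ) * c := by
        refine sum_subset (fun p hp => ?_) (fun p hp hpn => ?_)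
        · simp only [mem_filter, Nat.mem_primeFactors, mem_range] at hp ⊢
          exact ⟨by omega, hp.1.1⟩
        · have hpn' : p ∉ n.primeFactors := fun h =>
            hpn (mem_filter.2 ⟨h, Nat.lt_succ_iff.mp (mem_range.mp (mem_filter.mp hp).1)⟩)
          rw [Finsupp.notMem_support_iff.mp hpn', Nat.cast_zero, zero_mul]
    _ = smallOmega t n * c := by simp [smallOmega, sum_mul]

namespace IsMRT

variable {u : ℕ → ℂ} {t s : ℕ → ℕ}

theorem map_one (hu : IsMRT u t s) : u 1 = 1 := by
  have h1 : u 1 * u 1 = u 1 * 1 := by rw [mul_one, ← hu.mult 1 1 le_rfl le_rfl]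
  exact mul_left_cancel₀ (norm_ne_zero_iff.mp (by rw [hu.norm_one 1 le_rfl]; exact one_ne_zero)) h1

theorem norm_sub_cpow_le (hu : IsMRT u t s) {m n : ℕ} (hm : 1 ≤ m) (hn : n ≠ 0)
    (hnt : n ≤ t (m + 1)) :
    ‖u n - (n : ℂ) ^ ((s (m + 1) : ℂ) * Complex.I)‖ ≤ smallOmega (t m) n / (t m : ℝ) ^ 2 := by
  set c : ℂ := (s (m + 1) : ℂ) * Complex.I
  have norm_cpow (k : ℕ) (hk : k ≠ 0) : ‖(k : ℂ) ^ c‖ = 1 := by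
    simp [Complex.norm_natCast_cpow_of_pos (Nat.pos_of_ne_zero hk), c]
  refine (norm_sub_le_factorization_sum (g := fun k : ℕ => (k : ℂ) ^ c)
    (fun k hk => (hu.norm_one k (Nat.one_le_iff_ne_zero.mpr hk)).le)
    (fun k hk => (norm_cpow k hk).le)
    (fun a b ha hb => hu.mult a b (Nat.one_le_iff_ne_zero.mpr ha) (Nat.one_le_iff_ne_zero.mpr hb))
    (fun a b _ _ => by simp only [Nat.cast_mul, Complex.natCast_mul_natCast_cpow])
    (by simp [hu.map_one]) hn).trans ?_
  rw [div_eq_mul_one_div]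
  refine factorization_sum_le_smallOmega_mul fun p hp => ?_
  have hp_prime := Nat.prime_of_mem_primeFactors hp
  split_ifs with hpt
  · exact (hu.map_prime_small m hm p hp_prime hpt).le
  · have hpt' : p ≤ t (m + 1) := (Nat.le_of_mem_primeFactors hp).trans hnt
    simp [hu.map_prime_big m hm p hp_prime (not_le.mp hpt) hpt', c]

theorem mem_Bset_of_lt_norm_sub_cpow (hu : IsMRT u t s) {m n : ℕ} (hm : 1 ≤ m) (hn : n ≠ 0)
    (hnt : n ≤ t (m + 1))
    (hbad : 1 / (t m : ℝ) < ‖u n - (n : ℂ) ^ ((s (m + 1) : ℂ) * Complex.I)‖) :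
    n ∈ Bset (t m) := by
  by_contra hnB
  have hΩ : (smallOmega (t m) n : ℝ) < t m := by
    exact_mod_cast not_le.mp hnB
  have htm : (0 : ℝ) < t m := by exact_mod_cast hu.t_pos m
  have : (smallOmega (t m) n : ℝ) / (t m : ℝ) ^ 2 < 1 / (t m : ℝ) := by
    rw [div_lt_div_iff₀ (by positivity) htm]; nlinarith
  exact (hbad.trans_le (hu.norm_sub_cpow_le hm hn hnt)).not_gt this

end IsMRT

def partialDensity (S : Set ℕ) (N : ℕ) : ℝ :=
  (N : ℝ)⁻¹ * ∑ n ∈ Icc 1 N, S.indicator (fun _ => (1 : ℝ)) n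

theorem partialDensity_nonneg (S : Set ℕ) (N : ℕ) : 0 ≤ partialDensity S N :=
  mul_nonneg (by positivity) (sum_nonneg fun _ _ => Set.indicator_nonneg (fun _ _ => zero_le_one) _)

theorem partialDensity_le_one (S : Set ℕ) (N : ℕ) : partialDensity S N ≤ 1 := by
  have hsum : ∑ n ∈ Icc 1 N, S.indicator (fun _ => (1 : ℝ)) n ≤ N := by
    simpa using sum_le_sum fun n (_ : n ∈ Icc 1 N) =>
      Set.indicator_le_self' (s := S) (f := fun _ => (1 : ℝ)) (fun _ _ => zero_le_one) n
  rcases N.eq_zero_or_pos with rfl | hN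
  · simp [partialDensity]
  · rw [partialDensity, inv_mul_le_iff₀ (by exact_mod_cast hN), mul_one]
    exact hsum

theorem partialDensity_mono {S T : Set ℕ} {N : ℕ} (h : ∀ n ∈ Icc 1 N, n ∈ S → n ∈ T) :
    partialDensity S N ≤ partialDensity T N :=
  mul_le_mul_of_nonneg_left (sum_le_sum fun n hn =>
    Set.indicator_apply_le' (fun hS => (Set.indicator_of_mem (h n hn hS) (fun _ => (1 : ℝ))).ge)
      (fun _ => Set.indicator_nonneg (fun _ _ => zero_le_one) n)) (by positivity)

theorem partialDensity_le_eps (t N : ℕ) : partialDensity (Bset t) N ≤ eps t :=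
  le_ciSup (f := partialDensity (Bset t)) ⟨1, Set.forall_mem_range.mpr (partialDensity_le_one _)⟩ N

theorem sum_smallOmega_Icc (t N : ℕ) :
    ∑ n ∈ Icc 1 N, smallOmega t n = smallOmega t N.factorial := by
  induction N with
  | zero => simp [smallOmega]
  | succ N ih =>
    rw [sum_Icc_succ_top (by omega), ih, Nat.factorial_succ, smallOmega, smallOmega, smallOmega,
      Nat.factorization_mul (by omega) (Nat.factorial_ne_zero N), ← sum_add_distrib]
    simp only [Finsupp.add_apply, add_comm]

theorem sum_inv_prime_sub_one_le (t : ℕ) :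
    ∑ p ∈ (range (t + 1)).filter Nat.Prime, (1 : ℝ) / ((p - 1 : ℕ) : ℝ)
      ≤ ∑ j ∈ range t, (1 : ℝ) / ((j : ℝ) + 1) :=
  calc ∑ p ∈ (range (t + 1)).filter Nat.Prime, (1 : ℝ) / ((p - 1 : ℕ) : ℝ)
      ≤ ∑ p ∈ Ico 2 (t + 1), (1 : ℝ) / ((p - 1 : ℕ) : ℝ) :=
        sum_le_sum_of_subset_of_nonneg (fun p hp => by
          simp only [mem_filter, mem_range, mem_Ico] at hp ⊢
          exact ⟨hp.2.two_le, hp.1⟩) (fun _ _ _ => by positivity)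
    _ = ∑ j ∈ range (t - 1), (1 : ℝ) / ((j : ℝ) + 1) := by
        rw [sum_Ico_eq_sum_range, show t + 1 - 2 = t - 1 by omega]
        refine sum_congr rfl fun j _ => ?_
        rw [show 2 + j - 1 = j + 1 by omega, Nat.cast_succ]
    _ ≤ ∑ j ∈ range t, (1 : ℝ) / ((j : ℝ) + 1) :=
        sum_le_sum_of_subset_of_nonneg (range_subset_range.mpr (Nat.sub_le t 1))
          (fun _ _ _ => by positivity)

theorem smallOmega_factorial_le (t N : ℕ) :
    (smallOmega t N.factorial : ℝ) ≤ N * ∑ j ∈ range t, (1 : ℝ) / ((j : ℝ) + 1) := by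
  calc (smallOmega t N.factorial : ℝ)
      ≤ ∑ p ∈ (range (t + 1)).filter Nat.Prime, ((N / (p - 1) : ℕ) : ℝ) := by
        rw [smallOmega, Nat.cast_sum]
        exact sum_le_sum fun p hp =>
          Nat.cast_le.mpr (Nat.factorization_factorial_le_div_pred (mem_filter.mp hp).2 N)
    _ ≤ ∑ p ∈ (range (t + 1)).filter Nat.Prime, (N : ℝ) * (1 / ((p - 1 : ℕ) : ℝ)) :=
        sum_le_sum fun _ _ => by rw [mul_one_div]; exact Nat.cast_div_le
    _ ≤ N * ∑ j ∈ range t, (1 : ℝ) / ((j : ℝ) + 1) := by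
        rw [← mul_sum]; gcongr; exact sum_inv_prime_sub_one_le t

theorem eps_le_harmonic_mean (t : ℕ) (ht : 1 ≤ t) :
    eps t ≤ (t : ℝ)⁻¹ * ∑ j ∈ range t, (1 : ℝ) / ((j : ℝ) + 1) := by
  refine ciSup_le fun N => ?_
  have indicator_mul_le (n : ℕ) : (Bset t).indicator (fun _ => (1 : ℝ)) n * t ≤ smallOmega t n := by
    by_cases hn : n ∈ Bset t
    · rw [Set.indicator_of_mem hn, one_mul]; exact_mod_cast hn
    · simp [hn]
  have htpos : (0 : ℝ) < t := by exact_mod_cast ht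
  change partialDensity (Bset t) N ≤ _
  rw [← mul_le_mul_iff_left₀ htpos, partialDensity, mul_assoc, sum_mul]
  calc (N : ℝ)⁻¹ * ∑ n ∈ Icc 1 N, (Bset t).indicator (fun _ => (1 : ℝ)) n * t
      ≤ (N : ℝ)⁻¹ * (smallOmega t N.factorial : ℝ) := by
        rw [← sum_smallOmega_Icc, Nat.cast_sum]
        gcongr with n; exact indicator_mul_le n
    _ ≤ (N : ℝ)⁻¹ * (N * ∑ j ∈ range t, (1 : ℝ) / ((j : ℝ) + 1)) := by
        gcongr; exact smallOmega_factorial_le t N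
    _ ≤ ∑ j ∈ range t, (1 : ℝ) / ((j : ℝ) + 1) := by
        rw [← mul_assoc]
        exact mul_le_of_le_one_left (sum_nonneg fun _ _ => by positivity) inv_mul_le_one
    _ = (t : ℝ)⁻¹ * (∑ j ∈ range t, (1 : ℝ) / ((j : ℝ) + 1)) * t := by field_simp

theorem mrt_bad_density_general (u : ℕ → ℂ) (t s : ℕ → ℕ) (hu : IsMRT u t s)
    (N : ℕ → ℕ) (hNt : ∀ m, N m ≤ t (m + 1)) :
    (∀ m, 1 ≤ m →
      (N m : ℝ)⁻¹ * ∑ n ∈ Finset.Icc 1 (N m),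
          Set.indicator {k : ℕ | 1 / (t m : ℝ) < ‖u k - (k : ℂ) ^ ((s (m + 1) : ℂ) * Complex.I)‖}
            (fun _ => (1 : ℝ)) n
        ≤ eps (t m)) ∧
    Filter.Tendsto
      (fun m => (N m : ℝ)⁻¹ * ∑ n ∈ Finset.Icc 1 (N m),
          Set.indicator {k : ℕ | 1 / (t m : ℝ) < ‖u k - (k : ℂ) ^ ((s (m + 1) : ℂ) * Complex.I)‖}
            (fun _ => (1 : ℝ)) n)
      atTop (𝓝 0) := by
  have bad_le_eps (m : ℕ) (hm : 1 ≤ m) : partialDensity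
      {k : ℕ | 1 / (t m : ℝ) < ‖u k - (k : ℂ) ^ ((s (m + 1) : ℂ) * Complex.I)‖} (N m)
        ≤ eps (t m) := by
    refine (partialDensity_mono fun n hn hbad => ?_).trans (partialDensity_le_eps _ _)
    obtain ⟨hn1, hnN⟩ := mem_Icc.mp hn
    exact hu.mem_Bset_of_lt_norm_sub_cpow hm (by omega) (hnN.trans (hNt m)) hbad
  refine ⟨bad_le_eps, ?_⟩
  have harmonic_mean_tendsto : Tendsto (fun k : ℕ => (k : ℝ)⁻¹ * ∑ j ∈ range k, 1 / ((j : ℝ) + 1))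
      atTop (𝓝 0) :=
    tendsto_one_div_add_atTop_nhds_zero_nat.cesaro
  refine tendsto_of_tendsto_of_tendsto_of_le_of_le' tendsto_const_nhds
    (harmonic_mean_tendsto.comp hu.t_mono.tendsto_atTop)
    (Eventually.of_forall fun m => partialDensity_nonneg _ _) ?_
  filter_upwards [eventually_ge_atTop 1] with m hm
  exact (bad_le_eps m hm).trans (eps_le_harmonic_mean _ (hu.t_pos m))

/-- Let `u` be in the MRT class with sequences `(t_m)`, `(s_m)`, and let `(N_m)` be an
increasing sequence of positive integers with `N_m ≤ t_{m+1}`. Then the proportion of those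
`n ∈ {1, …, N_m}` for which `|u(n) − n^{i s_{m+1}}| > 1/t_m` is at most `ε_{t_m}`, and it
tends to `0` as `m → ∞`. -/
theorem mrt_bad_density (u : ℕ → ℂ) (t s : ℕ → ℕ) (hu : IsMRT u t s)
    (N : ℕ → ℕ) (hN : StrictMono N) (hNpos : ∀ m, 1 ≤ N m) (hNt : ∀ m, N m ≤ t (m + 1)) :
    (∀ m, 1 ≤ m →
      (N m : ℝ)⁻¹ * ∑ n ∈ Finset.Icc 1 (N m),
          Set.indicator {k : ℕ | 1 / (t m : ℝ) < ‖u k - (k : ℂ) ^ ((s (m + 1) : ℂ) * Complex.I)‖}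
            (fun _ => (1 : ℝ)) n
        ≤ eps (t m)) ∧
    Filter.Tendsto
      (fun m => (N m : ℝ)⁻¹ * ∑ n ∈ Finset.Icc 1 (N m),
          Set.indicator {k : ℕ | 1 / (t m : ℝ) < ‖u k - (k : ℂ) ^ ((s (m + 1) : ℂ) * Complex.I)‖}
            (fun _ => (1 : ℝ)) n)
      atTop (𝓝 0) :=
  mrt_bad_density_general u t s hu N hNt
end
end

section
/- Define sequences of polynomials (P_d)_{d≥0} and (Q_d)_{d≥0} by P_0(n) = n, Q_0(n) = 1, and for each d ≥ 0: P_{d+1}(n) = P_d(n+1)·Q_d(n) and Q_{d+1}(n) = Q_d(n+1)·P_d(n). Then for each d ≥ 1, P_d and Q_d both have degree 2^{d−1}, and the difference R_d := Q_d − P_d has degree exactly 2^{d−1} − d. -/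
/-! With `R_d = Q_d - P_d` the recursion reads `R_{d+1} = R_d(n+1)·P_d - P_d(n+1)·R_d`.
For polynomials `f, g` of degrees `a ≠ b`, the top terms of `f(n+1)·g - g(n+1)·f` in degree
`a + b` cancel, while, since `f(n+1) - f` has leading term `a·lc f·n^(a-1)`, its coefficient in
degree `a + b - 1` is `(a - b)·lc f·lc g ≠ 0`. The degrees of `P_d` and `Q_d` add under the
recursion, hence double, and `deg R_d = 2^(d-1) - d` follows by induction. -/

open Polynomial

noncomputable section

/-- The pair of polynomial sequences `(P_d, Q_d)`: `P_0(n) = n`, `Q_0(n) = 1`,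
`P_{d+1}(n) = P_d(n+1)·Q_d(n)` and `Q_{d+1}(n) = Q_d(n+1)·P_d(n)`. -/
def PQ : ℕ → Polynomial ℝ × Polynomial ℝ
  | 0 => (X, 1)
  | d + 1 => ((PQ d).1.comp (X + C 1) * (PQ d).2, (PQ d).2.comp (X + C 1) * (PQ d).1)

namespace Polynomial

variable {R : Type*} [CommRing R]

theorem taylor_eq_self_of_natDegree_eq_zero {f : R[X]} (hf : f.natDegree = 0) (r : R) :
    taylor r f = f := by
  rw [eq_C_of_natDegree_eq_zero hf, taylor_C]

theorem coeff_taylor_natDegree_sub_one (f : R[X]) (r : R) :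
    (taylor r f).coeff (f.natDegree - 1) =
      f.coeff (f.natDegree - 1) + f.natDegree * r * f.leadingCoeff := by
  rcases hf : f.natDegree with _ | n
  · simp [taylor_eq_self_of_natDegree_eq_zero hf]
  · have hlin : (hasseDeriv n f).natDegree ≤ 1 :=
      (natDegree_hasseDeriv_le f n).trans (by omega)
    rw [Nat.add_sub_cancel, taylor_coeff, eq_X_add_C_of_natDegree_le_one hlin]
    simp only [eval_add, eval_mul, eval_C, eval_X, hasseDeriv_coeff]
    rw [zero_add, Nat.choose_self, add_comm 1, Nat.choose_succ_self_right, leadingCoeff, hf]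
    push_cast
    ring

theorem natDegree_taylor_sub_self_le (f : R[X]) (r : R) :
    (taylor r f - f).natDegree ≤ f.natDegree - 1 :=
  natDegree_le_pred ((natDegree_sub_le _ _).trans (by rw [natDegree_taylor, max_self]))
    (by rw [coeff_sub, coeff_taylor_natDegree, coeff_natDegree, sub_self])

theorem coeff_taylor_sub_self_mul (f g : R[X]) (r : R) :
    ((taylor r f - f) * g).coeff (f.natDegree + g.natDegree - 1) =
      f.natDegree * r * f.leadingCoeff * g.leadingCoeff := by
  rcases Nat.eq_zero_or_pos f.natDegree with hf | hf
  · simp [hf, taylor_eq_self_of_natDegree_eq_zero hf]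
  · rw [show f.natDegree + g.natDegree - 1 = f.natDegree - 1 + g.natDegree by omega,
      coeff_mul_add_eq_of_natDegree_le (natDegree_taylor_sub_self_le f r) le_rfl, coeff_sub,
      coeff_taylor_natDegree_sub_one, coeff_natDegree]
    ring

theorem natDegree_taylor_mul_sub_le (f g : R[X]) (r : R) :
    (taylor r f * g - taylor r g * f).natDegree ≤ f.natDegree + g.natDegree - 1 := by
  have hf := (natDegree_taylor f r).le
  have hg := (natDegree_taylor g r).le
  refine natDegree_le_pred ((natDegree_sub_le _ _).trans (max_le ?_ ?_)) ?_
  · exact natDegree_mul_le_of_le hf le_rfl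
  · exact (natDegree_mul_le_of_le hg le_rfl).trans_eq (add_comm _ _)
  · rw [coeff_sub, coeff_mul_add_eq_of_natDegree_le hf le_rfl, add_comm,
      coeff_mul_add_eq_of_natDegree_le hg le_rfl, coeff_taylor_natDegree, coeff_taylor_natDegree,
      coeff_natDegree, coeff_natDegree, mul_comm, sub_self]

theorem coeff_taylor_mul_sub (f g : R[X]) (r : R) :
    (taylor r f * g - taylor r g * f).coeff (f.natDegree + g.natDegree - 1) =
      (f.natDegree - g.natDegree) * r * f.leadingCoeff * g.leadingCoeff := by
  have hsplit : taylor r f * g - taylor r g * f = (taylor r f - f) * g - (taylor r g - g) * f := by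
    ring
  rw [hsplit, coeff_sub, coeff_taylor_sub_self_mul, add_comm, coeff_taylor_sub_self_mul]
  ring

theorem natDegree_taylor_mul_sub [IsDomain R] [CharZero R] {f g : R[X]} {r : R} (hf : f ≠ 0)
    (hg : g ≠ 0) (hr : r ≠ 0) (hfg : f.natDegree ≠ g.natDegree) :
    taylor r f * g - taylor r g * f ≠ 0 ∧
      (taylor r f * g - taylor r g * f).natDegree = f.natDegree + g.natDegree - 1 := by
  have hcoeff : (taylor r f * g - taylor r g * f).coeff (f.natDegree + g.natDegree - 1) ≠ 0 := by
    rw [coeff_taylor_mul_sub]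
    have hdiff : (f.natDegree - g.natDegree : R) ≠ 0 :=
      sub_ne_zero.mpr (Nat.cast_injective.ne hfg)
    exact mul_ne_zero (mul_ne_zero (mul_ne_zero hdiff hr) (leadingCoeff_ne_zero.mpr hf))
      (leadingCoeff_ne_zero.mpr hg)
  exact ⟨fun h => hcoeff (by rw [h, coeff_zero]),
    natDegree_eq_of_le_of_coeff_ne_zero (natDegree_taylor_mul_sub_le f g r) hcoeff⟩

end Polynomial

theorem PQ_succ (d : ℕ) :
    PQ (d + 1) = (taylor 1 (PQ d).1 * (PQ d).2, taylor 1 (PQ d).2 * (PQ d).1) := by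
  rw [PQ, taylor_apply, taylor_apply]

theorem PQ_ne_zero (d : ℕ) : (PQ d).1 ≠ 0 ∧ (PQ d).2 ≠ 0 := by
  induction d with
  | zero => exact ⟨X_ne_zero, one_ne_zero⟩
  | succ d ih =>
    rw [PQ_succ]
    exact ⟨mul_ne_zero ((taylor_eq_zero 1 _).not.mpr ih.1) ih.2,
      mul_ne_zero ((taylor_eq_zero 1 _).not.mpr ih.2) ih.1⟩

theorem natDegree_PQ_succ_eq_add (d : ℕ) :
    (PQ (d + 1)).1.natDegree = (PQ d).1.natDegree + (PQ d).2.natDegree ∧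
      (PQ (d + 1)).2.natDegree = (PQ d).1.natDegree + (PQ d).2.natDegree := by
  obtain ⟨hP, hQ⟩ := PQ_ne_zero d
  simp only [PQ_succ]
  rw [natDegree_mul ((taylor_eq_zero 1 _).not.mpr hP) hQ,
    natDegree_mul ((taylor_eq_zero 1 _).not.mpr hQ) hP, natDegree_taylor, natDegree_taylor,
    add_comm]
  exact ⟨rfl, rfl⟩

theorem natDegree_PQ_succ_eq_two_pow (d : ℕ) :
    (PQ (d + 1)).1.natDegree = 2 ^ d ∧ (PQ (d + 1)).2.natDegree = 2 ^ d := by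
  induction d with
  | zero =>
    rw [(natDegree_PQ_succ_eq_add 0).1, (natDegree_PQ_succ_eq_add 0).2]
    simp [PQ]
  | succ d ih =>
    rw [(natDegree_PQ_succ_eq_add (d + 1)).1, (natDegree_PQ_succ_eq_add (d + 1)).2, ih.1, ih.2,
      pow_succ]
    exact ⟨by ring, by ring⟩

theorem PQ_succ_snd_sub_fst (d : ℕ) :
    (PQ (d + 1)).2 - (PQ (d + 1)).1 =
      taylor 1 ((PQ d).2 - (PQ d).1) * (PQ d).1 - taylor 1 (PQ d).1 * ((PQ d).2 - (PQ d).1) := by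
  rw [PQ_succ, map_sub]
  ring

theorem natDegree_PQ_succ_snd_sub_fst (d : ℕ) :
    (PQ (d + 1)).2 - (PQ (d + 1)).1 ≠ 0 ∧
      ((PQ (d + 1)).2 - (PQ (d + 1)).1).natDegree = 2 ^ d - (d + 1) := by
  induction d with
  | zero =>
    have h : (PQ 1).2 - (PQ 1).1 = -1 := by simp [PQ]
    simp [h]
  | succ d ih =>
    have hP := (natDegree_PQ_succ_eq_two_pow d).1
    obtain ⟨hR, hRdeg⟩ := ih
    have hlt : d < 2 ^ d := Nat.lt_two_pow_self
    rw [PQ_succ_snd_sub_fst]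
    obtain ⟨hne, hdeg⟩ := natDegree_taylor_mul_sub hR (PQ_ne_zero (d + 1)).1 one_ne_zero
      (by omega)
    refine ⟨hne, hdeg.trans ?_⟩
    rw [hRdeg, hP, pow_succ]
    omega

/-- For each `d ≥ 1`, `P_d` and `Q_d` both have degree `2^(d−1)`, and the difference
`R_d = Q_d − P_d` is nonzero of degree exactly `2^(d−1) − d`. -/
theorem degrees_of_PQ (d : ℕ) (hd : 1 ≤ d) :
    (PQ d).1.natDegree = 2 ^ (d - 1) ∧ (PQ d).2.natDegree = 2 ^ (d - 1) ∧
      (PQ d).2 - (PQ d).1 ≠ 0 ∧ ((PQ d).2 - (PQ d).1).natDegree = 2 ^ (d - 1) - d := by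
  obtain ⟨n, rfl⟩ := Nat.exists_eq_add_of_le' hd
  rw [Nat.add_sub_cancel]
  exact ⟨(natDegree_PQ_succ_eq_two_pow n).1, (natDegree_PQ_succ_eq_two_pow n).2,
    natDegree_PQ_succ_snd_sub_fst n⟩
end
end

section
/- Let (s_m) be an increasing sequence of positive integers. Let d ≥ 0 be fixed and choose a real number β with 1/(d+1) < β < 1/d if d ≥ 1, and 1 < β < 2 if d = 0. Set N_m := ⌊(s_{m+1})^β⌋ for each m ≥ 1. Then: (i) for every integer ℓ ≥ 1, (1/N_m) Σ_{1 ≤ n ≤ N_m} e^{i ℓ s_{m+1} f_d(n)} → 0 as m → ∞; and (ii) (1/N_m) Σ_{1 ≤ n ≤ N_m} e^{i s_{m+1} f_{d+1}(n)} → 1 as m → ∞. -/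
open Polynomial Filter Topology

noncomputable section

/-- `f_d(x) = log (P_d(x)/Q_d(x))`, well defined for `x` large enough. -/
def fd (d : ℕ) (x : ℝ) : ℝ := Real.log ((PQ d).1.eval x / (PQ d).2.eval x)

/-!
Since `f_0 = log` and `f_{d+1}(x) = f_d(x + 1) - f_d(x)`, `f_d` is the `d`-th forward difference
of `log`, with derivative `(-1)^d d! / (x (x+1) ⋯ (x+d))`. So `(-1)^d f_{d+1}` is decreasing on
`(0, ∞)`, and by the mean value theorem `(-1)^d f_{d+1}(x) = d! / (ξ (ξ+1) ⋯ (ξ+d))` for some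
`ξ ∈ (x, x + 1)`, which is of size `d! / x^{d+1}`.

Write `s = s_{m+1}`, `N = ⌊s^β⌋` and split the sums at `A = ⌈s^γ⌉` with `1/(d+1) < γ < β`; the
first `A` terms are negligible against `N`. Beyond `A` the increments `ℓ s f_{d+1}(n)` of the phases
in (i) are monotone and at most `ℓ d! s^{1 - γ(d+1)} → 0`, so the Kusmin–Landau inequality bounds
that part of the sum by `O(N^{d+1} / s)`, which is `o(N)` because `βd < 1`. In (ii) these increments
are themselves the phases, and they tend to `0` uniformly in `n ≥ A`.
-/

open Real Finset
open scoped Nat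

section Pochhammer

lemma ascPochhammer_succ_eval_left {S : Type*} [CommSemiring S] (n : ℕ) (x : S) :
    (ascPochhammer S (n + 1)).eval x = x * (ascPochhammer S n).eval (x + 1) := by
  simp [ascPochhammer_succ_left, eval_comp]

variable {S : Type*} [CommRing S] [LinearOrder S] [IsStrictOrderedRing S] {x y : S}

lemma ascPochhammer_eval_le_of_le (n : ℕ) (hx : 0 < x) (hxy : x ≤ y) :
    (ascPochhammer S n).eval x ≤ (ascPochhammer S n).eval y := by
  induction n with
  | zero => simp
  | succ n ih =>
    rw [ascPochhammer_succ_eval, ascPochhammer_succ_eval]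
    gcongr
    exact (ascPochhammer_pos n y (hx.trans_le hxy)).le

lemma pow_le_ascPochhammer_eval (n : ℕ) (hx : 0 ≤ x) : x ^ n ≤ (ascPochhammer S n).eval x := by
  induction n with
  | zero => simp
  | succ n ih =>
    rw [pow_succ, ascPochhammer_succ_eval]
    exact mul_le_mul ih (le_add_of_nonneg_right n.cast_nonneg) hx ((pow_nonneg hx n).trans ih)

lemma ascPochhammer_eval_le_pow (n : ℕ) (hx : 0 ≤ x) :
    (ascPochhammer S n).eval x ≤ (x + n) ^ n := by
  induction n with
  | zero => simp
  | succ n ih =>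
    rw [ascPochhammer_succ_eval, pow_succ]
    push_cast
    gcongr
    · exact ih.trans (by gcongr; linarith)
    · linarith

end Pochhammer

section LogarithmicDifferences

lemma PQ_eval_pos (d : ℕ) {x : ℝ} (hx : 0 < x) :
    0 < (PQ d).1.eval x ∧ 0 < (PQ d).2.eval x := by
  induction d generalizing x with
  | zero => simp [PQ, hx]
  | succ d ih =>
    simp only [PQ, eval_mul, eval_comp, eval_add, eval_X, eval_C]
    exact ⟨mul_pos (ih (by linarith)).1 (ih hx).2, mul_pos (ih (by linarith)).2 (ih hx).1⟩

lemma fd_succ (d : ℕ) {x : ℝ} (hx : 0 < x) : fd (d + 1) x = fd d (x + 1) - fd d x := by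
  obtain ⟨p₀, q₀⟩ := PQ_eval_pos d hx
  obtain ⟨p₁, q₁⟩ := PQ_eval_pos d (show 0 < x + 1 by linarith)
  simp only [fd, PQ, eval_mul, eval_comp, eval_add, eval_X, eval_C]
  rw [log_div (by positivity) (by positivity), log_div (by positivity) (by positivity),
    log_div (by positivity) (by positivity), log_mul (by positivity) (by positivity),
    log_mul (by positivity) (by positivity)]
  ring

lemma hasDerivAt_fd (d : ℕ) {x : ℝ} (hx : 0 < x) :
    HasDerivAt (fd d) ((-1) ^ d * d ! / (ascPochhammer ℝ (d + 1)).eval x) x := by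
  induction d generalizing x with
  | zero =>
    have h : fd 0 = log := funext fun y => by simp [fd, PQ]
    simpa [h] using hasDerivAt_log hx.ne'
  | succ d ih =>
    have hdiff := (HasDerivAt.comp_add_const x 1 (ih (by linarith))).sub (ih hx)
    refine (hdiff.congr_of_eventuallyEq ?_).congr_deriv ?_
    · filter_upwards [Ioi_mem_nhds hx] with y hy using fd_succ d hy
    have hG := ascPochhammer_pos (d + 1) x hx
    have hG₁ := ascPochhammer_pos (d + 1) (x + 1) (by linarith)
    have hrec := ascPochhammer_succ_eval (d + 1) x
    rw [ascPochhammer_succ_eval_left (d + 1) x] at hrec ⊢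
    rw [pow_succ, Nat.factorial_succ]
    push_cast at hrec ⊢
    field_simp
    linear_combination -hrec

lemma exists_neg_one_pow_mul_fd_succ_eq (d : ℕ) {x : ℝ} (hx : 0 < x) :
    ∃ ξ ∈ Set.Ioo x (x + 1),
      (-1) ^ d * fd (d + 1) x = d ! / (ascPochhammer ℝ (d + 1)).eval ξ := by
  obtain ⟨ξ, hξ, hslope⟩ := exists_hasDerivAt_eq_slope (fd d) _ (by linarith : x < x + 1)
    (fun y hy => (hasDerivAt_fd d (hx.trans_le hy.1)).continuousAt.continuousWithinAt)
    (fun y hy => hasDerivAt_fd d (hx.trans hy.1))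
  rw [add_sub_cancel_left, div_one] at hslope
  refine ⟨ξ, hξ, ?_⟩
  rw [fd_succ d hx, ← hslope, ← mul_div_assoc, ← mul_assoc, ← mul_pow]
  norm_num

theorem neg_one_pow_mul_fd_succ_mem_Icc (d : ℕ) {x : ℝ} (hx : 0 < x) :
    (-1) ^ d * fd (d + 1) x ∈ Set.Icc (d ! / (x + d + 2) ^ (d + 1)) (d ! / x ^ (d + 1)) := by
  obtain ⟨ξ, ⟨hxξ, hξx⟩, hξ⟩ := exists_neg_one_pow_mul_fd_succ_eq d hx
  have hξ₀ : 0 < ξ := hx.trans hxξ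
  rw [hξ]
  constructor
  · gcongr
    · exact ascPochhammer_pos _ _ hξ₀
    calc (ascPochhammer ℝ (d + 1)).eval ξ ≤ (ξ + (d + 1 : ℕ)) ^ (d + 1) :=
          ascPochhammer_eval_le_pow _ hξ₀.le
      _ ≤ (x + d + 2) ^ (d + 1) := pow_le_pow_left₀ (by positivity) (by push_cast; linarith) _
  · gcongr
    exact (pow_le_ascPochhammer_eval _ hx.le).trans (ascPochhammer_eval_le_of_le _ hx hxξ.le)

lemma abs_fd_succ_le (d : ℕ) {x : ℝ} (hx : 0 < x) : |fd (d + 1) x| ≤ d ! / x ^ (d + 1) := by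
  obtain ⟨hlow, hup⟩ := neg_one_pow_mul_fd_succ_mem_Icc d hx
  have hpos : 0 < (-1) ^ d * fd (d + 1) x := lt_of_lt_of_le (by positivity) hlow
  rwa [← abs_of_pos hpos, abs_mul, abs_pow, abs_neg, abs_one, one_pow, one_mul] at hup

theorem antitoneOn_neg_one_pow_mul_fd_succ (d : ℕ) :
    AntitoneOn (fun x => (-1) ^ d * fd (d + 1) x) (Set.Ioi 0) := by
  have hderiv : ∀ x ∈ Set.Ioi (0 : ℝ), HasDerivAt (fun x => (-1) ^ d * fd (d + 1) x)
      (-((d + 1) ! / (ascPochhammer ℝ (d + 2)).eval x)) x := fun x hx => by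
    refine ((hasDerivAt_fd (d + 1) hx).const_mul ((-1 : ℝ) ^ d)).congr_deriv ?_
    rw [pow_succ, ← mul_div_assoc, ← mul_assoc, ← mul_assoc, ← mul_pow]
    norm_num
    ring
  refine antitoneOn_of_hasDerivWithinAt_nonpos (convex_Ioi 0)
    (f' := fun x => -((d + 1) ! / (ascPochhammer ℝ (d + 2)).eval x))
    (fun x hx => (hderiv x hx).continuousAt.continuousWithinAt) (fun x hx => ?_) (fun x hx => ?_)
  · rw [interior_Ioi] at hx ⊢
    exact (hderiv x hx).hasDerivWithinAt
  · rw [interior_Ioi] at hx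
    have := ascPochhammer_pos (d + 2) x hx
    exact neg_nonpos.2 (by positivity)

end LogarithmicDifferences

section ExponentialSums

open Complex (I exp)

lemma div_pi_le_sin_half {θ : ℝ} (h₀ : 0 ≤ θ) (hπ : θ ≤ π) : θ / π ≤ sin (θ / 2) :=
  calc θ / π = 2 / π * (θ / 2) := by ring
    _ ≤ sin (θ / 2) := mul_le_sin (by linarith) (by linarith)

lemma cot_le_cot {a b : ℝ} (ha : 0 < a) (hab : a ≤ b) (hb : b ≤ π / 2) : cot b ≤ cot a := by
  rw [cot_eq_cos_div_sin, cot_eq_cos_div_sin]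
  exact div_le_div₀ (cos_nonneg_of_mem_Icc ⟨by linarith, by linarith⟩)
    (cos_le_cos_of_nonneg_of_le_pi ha.le (by linarith) hab)
    (sin_pos_of_pos_of_lt_pi ha (by linarith))
    (sin_le_sin_of_le_of_le_pi_div_two (by linarith) hb hab)

lemma cot_half_nonneg {θ : ℝ} (h₀ : 0 ≤ θ) (hπ : θ ≤ π) : 0 ≤ cot (θ / 2) := by
  rw [cot_eq_cos_div_sin]
  exact div_nonneg (cos_nonneg_of_mem_Icc ⟨by linarith, by linarith⟩)
    (sin_nonneg_of_nonneg_of_le_pi (by linarith) (by linarith))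

lemma cot_half_le {θ : ℝ} (h₀ : 0 < θ) (hπ : θ ≤ π) : cot (θ / 2) ≤ π / θ := by
  rw [cot_eq_cos_div_sin]
  calc cos (θ / 2) / sin (θ / 2) ≤ 1 / (θ / π) :=
        div_le_div₀ zero_le_one (cos_le_one _) (by positivity) (div_pi_le_sin_half h₀.le hπ)
    _ = π / θ := one_div_div θ π

/-- The value of `(e^{iθ} - 1)⁻¹`, whose real part does not depend on `θ`. -/
def cotWeight (θ : ℝ) : ℂ := -(1 + (cot (θ / 2) : ℂ) * I) / 2

lemma exp_I_mul_sub_one_mul_cotWeight {θ : ℝ} (hθ : sin (θ / 2) ≠ 0) :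
    (exp (I * θ) - 1) * cotWeight θ = 1 := by
  have hexp : exp (I * θ) = ((cos (θ / 2) ^ 2 - sin (θ / 2) ^ 2 : ℝ) : ℂ)
      + ((2 * sin (θ / 2) * cos (θ / 2) : ℝ) : ℂ) * I := by
    rw [← cos_two_mul', ← sin_two_mul, mul_div_cancel₀ θ two_ne_zero, mul_comm,
      Complex.exp_mul_I, Complex.ofReal_cos, Complex.ofReal_sin]
  have hpyth : (sin (θ / 2) : ℂ) ^ 2 + (cos (θ / 2) : ℂ) ^ 2 = 1 := by
    exact_mod_cast sin_sq_add_cos_sq (θ / 2)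
  have hsin : (sin (θ / 2) : ℂ) ≠ 0 := by exact_mod_cast hθ
  rw [hexp, cotWeight, cot_eq_cos_div_sin]
  simp only [Complex.ofReal_sub, Complex.ofReal_pow, Complex.ofReal_mul, Complex.ofReal_div,
    Complex.ofReal_ofNat]
  generalize (cos (θ / 2) : ℂ) = c at *
  generalize (sin (θ / 2) : ℂ) = s at *
  field_simp
  linear_combination (s - c * I) * hpyth - 2 * c ^ 2 * s * Complex.I_sq

lemma norm_cotWeight_le {θ : ℝ} (h₀ : 0 < θ) (hπ : θ ≤ π) : ‖cotWeight θ‖ ≤ π / (2 * θ) := by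
  have hsin : 0 < sin (θ / 2) := sin_pos_of_pos_of_lt_pi (by linarith) (by linarith)
  have hinv : cotWeight θ = (exp (I * θ) - 1)⁻¹ :=
    (inv_eq_of_mul_eq_one_right (exp_I_mul_sub_one_mul_cotWeight hsin.ne')).symm
  rw [hinv, norm_inv, Complex.norm_exp_I_mul_ofReal_sub_one, norm_mul, Real.norm_two,
    Real.norm_of_nonneg hsin.le]
  calc (2 * sin (θ / 2))⁻¹ ≤ (2 * (θ / π))⁻¹ := by
        gcongr
        exact div_pi_le_sin_half h₀.le hπ
    _ = π / (2 * θ) := by field_simp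

lemma cotWeight_sub (a b : ℝ) :
    cotWeight a - cotWeight b = ((cot (b / 2) - cot (a / 2)) / 2 : ℝ) * I := by
  simp only [cotWeight]
  push_cast
  ring

lemma sum_range_sub_mul_by_parts {R : Type*} [CommRing R] (z w : ℕ → R) (K : ℕ) :
    ∑ n ∈ range K, (z (n + 1) - z n) * w n
      = z K * w K - z 0 * w 0 - ∑ n ∈ range K, z (n + 1) * (w (n + 1) - w n) := by
  induction K with
  | zero => simp
  | succ K ih => rw [sum_range_succ, ih, sum_range_succ]; ring

/-- The Kusmin–Landau inequality. -/
theorem norm_sum_range_exp_le {ψ θ : ℕ → ℝ} {K : ℕ} (hψ : ∀ n < K, ψ (n + 1) = ψ n + θ n)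
    (hpos : 0 < θ K) (hπ : θ 0 ≤ π) (hanti : AntitoneOn θ (Set.Iic K)) :
    ‖∑ n ∈ range K, exp (I * ψ n)‖ ≤ 3 * π / (2 * θ K) := by
  have hθ : ∀ n ≤ K, θ K ≤ θ n ∧ θ n ≤ π := fun n hn =>
    ⟨hanti (Set.mem_Iic.2 hn) (Set.mem_Iic.2 le_rfl) hn,
      (hanti (Set.mem_Iic.2 (Nat.zero_le K)) (Set.mem_Iic.2 hn) (Nat.zero_le n)).trans hπ⟩
  have hpos' : ∀ n ≤ K, 0 < θ n := fun n hn => hpos.trans_le (hθ n hn).1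
  set z : ℕ → ℂ := fun n => exp (I * ψ n)
  set w : ℕ → ℂ := fun n => cotWeight (θ n)
  set g : ℕ → ℝ := fun n => cot (θ n / 2)
  have hz : ∀ n ∈ range K, z n = (z (n + 1) - z n) * w n := fun n hn => by
    have hn := mem_range.1 hn
    have hsin : sin (θ n / 2) ≠ 0 := (sin_pos_of_pos_of_lt_pi (by linarith [hpos' n hn.le])
      (by linarith [(hθ n hn.le).2, pi_pos])).ne'
    simp only [z, w, hψ n hn, Complex.ofReal_add, mul_add, Complex.exp_add]
    linear_combination (-exp (I * ψ n)) * exp_I_mul_sub_one_mul_cotWeight hsin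
  have hg : MonotoneOn g (Set.Iic K) := fun m hm n hn hmn => cot_le_cot
    (by linarith [hpos' n hn]) (by linarith [hanti hm hn hmn]) (by linarith [(hθ m hm).2])
  have hdw : ∀ n ∈ range K, ‖w (n + 1) - w n‖ = (g (n + 1) - g n) / 2 := fun n hn => by
    have hn := mem_range.1 hn
    have hgn : cot (θ n / 2) ≤ cot (θ (n + 1) / 2) :=
      hg (Set.mem_Iic.2 hn.le) (Set.mem_Iic.2 hn) (Nat.le_succ n)
    rw [cotWeight_sub, norm_mul, Complex.norm_I, mul_one, Complex.norm_real, Real.norm_eq_abs,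
      abs_of_nonpos (by linarith)]
    ring
  have hw : ∀ n ≤ K, ‖w n‖ ≤ π / (2 * θ K) := fun n hn =>
    (norm_cotWeight_le (hpos' n hn) (hθ n hn).2).trans
      (div_le_div_of_nonneg_left pi_pos.le (by positivity) (by linarith [(hθ n hn).1]))
  have hg₀ : 0 ≤ g 0 := cot_half_nonneg (hpos' 0 (Nat.zero_le K)).le (hθ 0 (Nat.zero_le K)).2
  have hgK : g K ≤ π / θ K := cot_half_le hpos (hθ K le_rfl).2
  have hzn : ∀ n, ‖z n‖ = 1 := fun n => Complex.norm_exp_I_mul_ofReal _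
  rw [sum_congr rfl hz, sum_range_sub_mul_by_parts]
  calc ‖z K * w K - z 0 * w 0 - ∑ n ∈ range K, z (n + 1) * (w (n + 1) - w n)‖
      ≤ ‖w K‖ + ‖w 0‖ + ∑ n ∈ range K, ‖w (n + 1) - w n‖ := by
        refine (norm_sub_le _ _).trans (add_le_add ((norm_sub_le _ _).trans_eq ?_) ?_)
        · rw [norm_mul, norm_mul, hzn, hzn, one_mul, one_mul]
        · exact (norm_sum_le _ _).trans_eq
            (sum_congr rfl fun n _ => by rw [norm_mul, hzn, one_mul])
    _ = ‖w K‖ + ‖w 0‖ + (g K - g 0) / 2 := by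
        rw [sum_congr rfl hdw, ← sum_div, sum_range_sub g]
    _ ≤ π / (2 * θ K) + π / (2 * θ K) + π / θ K / 2 := by
        gcongr
        · exact hw K le_rfl
        · exact hw 0 (Nat.zero_le K)
        · linarith
    _ = 3 * π / (2 * θ K) := by ring

lemma norm_sum_exp_I_mul_neg {ι : Type*} (s : Finset ι) (ψ : ι → ℝ) :
    ‖∑ i ∈ s, exp (I * ↑(-ψ i))‖ = ‖∑ i ∈ s, exp (I * ψ i)‖ := by
  have hconj : ∀ i ∈ s, exp (I * ↑(-ψ i)) = (starRingEnd ℂ) (exp (I * ψ i)) := fun i _ => by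
    rw [← Complex.exp_conj, map_mul, Complex.conj_I, Complex.conj_ofReal]
    push_cast
    ring_nf
  rw [sum_congr rfl hconj, ← map_sum, Complex.norm_conj]


lemma norm_sum_Icc_one_le_add {E : Type*} [SeminormedAddCommGroup E] {z : ℕ → E} {C : ℝ}
    (hz : ∀ n, ‖z n‖ ≤ C) {A N : ℕ} (hA : 1 ≤ A) (hAN : A ≤ N + 1) :
    ‖∑ n ∈ Icc 1 N, z n‖ ≤ C * A + ‖∑ n ∈ Icc A N, z n‖ := by
  rw [← Ico_add_one_right_eq_Icc, ← Ico_add_one_right_eq_Icc, ← sum_Ico_consecutive z hA hAN]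
  refine (norm_add_le _ _).trans (add_le_add ?_ le_rfl)
  refine (norm_sum_le_of_le _ fun n _ => hz n).trans ?_
  rw [sum_const, Nat.card_Ico, nsmul_eq_mul, mul_comm]
  have hC : 0 ≤ C := (norm_nonneg _).trans (hz 0)
  gcongr
  exact_mod_cast Nat.sub_le A 1

end ExponentialSums

section ExponentialSumsOfLogarithmicDifferences

open Complex (I exp)

theorem norm_sum_Icc_exp_mul_fd_le (d : ℕ) {T : ℝ} (hT : 0 < T) {A N : ℕ} (hA : 1 ≤ A)
    (hAN : A ≤ N + 1) (hTA : T * (d ! / A ^ (d + 1)) ≤ π) :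
    ‖∑ n ∈ Icc A N, exp (I * ↑(T * fd d n))‖
      ≤ 3 * π * (N + d + 3) ^ (d + 1) / (2 * T * d !) := by
  set ψ : ℕ → ℝ := fun k => (-1) ^ d * (T * fd d ↑(A + k))
  set θ : ℕ → ℝ := fun k => T * ((-1) ^ d * fd (d + 1) ↑(A + k))
  have hA₀ : ∀ k, (0 : ℝ) < ↑(A + k) := fun k => Nat.cast_pos.2 (by omega)
  -- The factor `(-1)^d` makes the increments `θ` positive; conjugation preserves the norm.
  have hsum : ‖∑ n ∈ Icc A N, exp (I * ↑(T * fd d n))‖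
      = ‖∑ k ∈ range (N + 1 - A), exp (I * ψ k)‖ := by
    rw [← Ico_add_one_right_eq_Icc, sum_Ico_eq_sum_range]
    rcases neg_one_pow_eq_or ℝ d with h | h
    · simp [ψ, h]
    · simp only [ψ, h, neg_one_mul, norm_sum_exp_I_mul_neg]
  have hψ : ∀ k < N + 1 - A, ψ (k + 1) = ψ k + θ k := fun k _ => by
    simp only [ψ, θ, fd_succ d (hA₀ k), ← add_assoc, Nat.cast_add_one]
    ring
  have hanti : AntitoneOn θ (Set.Iic (N + 1 - A)) := fun m _ n _ hmn =>
    mul_le_mul_of_nonneg_left (antitoneOn_neg_one_pow_mul_fd_succ d (hA₀ m) (hA₀ n)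
      (by exact_mod_cast Nat.add_le_add_left hmn A)) hT.le
  have hθ₀ : θ 0 ≤ π := by
    refine le_trans (mul_le_mul_of_nonneg_left ?_ hT.le) hTA
    simpa using (neg_one_pow_mul_fd_succ_mem_Icc d (hA₀ 0)).2
  have hθlast : T * (d ! / ((N : ℝ) + d + 3) ^ (d + 1)) ≤ θ (N + 1 - A) := by
    refine mul_le_mul_of_nonneg_left (le_of_eq_of_le ?_
      (neg_one_pow_mul_fd_succ_mem_Icc d (hA₀ (N + 1 - A))).1) hT.le
    rw [show A + (N + 1 - A) = N + 1 by omega]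
    push_cast
    ring_nf
  have hθlast₀ : 0 < T * (d ! / ((N : ℝ) + d + 3) ^ (d + 1)) := by positivity
  rw [hsum]
  calc ‖∑ k ∈ range (N + 1 - A), exp (I * ψ k)‖
      ≤ 3 * π / (2 * θ (N + 1 - A)) :=
        norm_sum_range_exp_le hψ (hθlast₀.trans_le hθlast) hθ₀ hanti
    _ ≤ 3 * π / (2 * (T * (d ! / ((N : ℝ) + d + 3) ^ (d + 1)))) := by gcongr
    _ = 3 * π * (N + d + 3) ^ (d + 1) / (2 * T * d !) := by field_simp

lemma norm_sum_Icc_exp_mul_fd_succ_sub_one_le (d : ℕ) {T : ℝ} (hT : 0 ≤ T) {A N : ℕ}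
    (hA : 1 ≤ A) :
    ‖∑ n ∈ Icc A N, (exp (I * ↑(T * fd (d + 1) n)) - 1)‖ ≤ N * (T * (d ! / A ^ (d + 1))) := by
  have hA₀ : (0 : ℝ) < A := Nat.cast_pos.2 hA
  have hterm : ∀ n ∈ Icc A N,
      ‖exp (I * ↑(T * fd (d + 1) n)) - 1‖ ≤ T * (d ! / A ^ (d + 1)) := by
    intro n hn
    have hAn : (A : ℝ) ≤ n := Nat.cast_le.2 (mem_Icc.1 hn).1
    calc ‖exp (I * ↑(T * fd (d + 1) n)) - 1‖ ≤ ‖T * fd (d + 1) n‖ :=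
          Real.norm_exp_I_mul_ofReal_sub_one_le
      _ = T * |fd (d + 1) n| := by rw [Real.norm_eq_abs, abs_mul, abs_of_nonneg hT]
      _ ≤ T * (d ! / n ^ (d + 1)) := by gcongr; exact abs_fd_succ_le d (hA₀.trans_le hAn)
      _ ≤ T * (d ! / A ^ (d + 1)) := by gcongr
  refine (norm_sum_le_of_le _ hterm).trans ?_
  rw [sum_const, Nat.card_Icc, nsmul_eq_mul]
  gcongr
  exact_mod_cast (by omega : N + 1 - A ≤ N)

end ExponentialSumsOfLogarithmicDifferences

section Asymptotics

variable {β γ : ℝ}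

lemma tendsto_natCeil_rpow_div_natFloor_rpow (hγ : 0 < γ) (hγβ : γ < β) :
    Tendsto (fun t : ℝ => (⌈t ^ γ⌉₊ : ℝ) / ⌊t ^ β⌋₊) atTop (𝓝 0) := by
  have hceil := tendsto_nat_ceil_div_atTop.comp (tendsto_rpow_atTop hγ)
  have hfloor := (tendsto_nat_floor_div_atTop.comp (tendsto_rpow_atTop (hγ.trans hγβ))).inv₀
    one_ne_zero
  have hpow : Tendsto (fun t : ℝ => t ^ (γ - β)) atTop (𝓝 0) := by
    simpa using tendsto_rpow_neg_atTop (sub_pos.2 hγβ)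
  have h := (hceil.mul hfloor).mul hpow
  rw [inv_one, mul_one, mul_zero] at h
  refine h.congr' ?_
  filter_upwards [eventually_gt_atTop 0] with t ht
  simp only [Function.comp_apply, inv_div, rpow_sub ht]
  have := rpow_pos_of_pos ht γ
  have := rpow_pos_of_pos ht β
  field_simp

lemma eventually_one_le_natCeil_rpow_le_natFloor_rpow (hγ : 0 < γ) (hγβ : γ < β) :
    ∀ᶠ t : ℝ in atTop, 1 ≤ ⌈t ^ γ⌉₊ ∧ ⌈t ^ γ⌉₊ ≤ ⌊t ^ β⌋₊ := by
  filter_upwards [(tendsto_natCeil_rpow_div_natFloor_rpow hγ hγβ).eventually_lt_const one_pos,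
    (tendsto_rpow_atTop (hγ.trans hγβ)).eventually_ge_atTop 1, eventually_gt_atTop 0]
    with t hratio hβ₁ ht
  have hN : (0 : ℝ) < ⌊t ^ β⌋₊ := Nat.cast_pos.2 (Nat.floor_pos.2 hβ₁)
  exact ⟨Nat.one_le_ceil_iff.2 (rpow_pos_of_pos ht γ),
    by exact_mod_cast ((div_lt_one hN).1 hratio).le⟩

lemma tendsto_div_natCeil_rpow_pow {d : ℕ} (hγd : 1 < γ * (d + 1)) :
    Tendsto (fun t : ℝ => t / (⌈t ^ γ⌉₊ : ℝ) ^ (d + 1)) atTop (𝓝 0) := by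
  have hpow : Tendsto (fun t : ℝ => t ^ (1 - γ * (d + 1))) atTop (𝓝 0) := by
    simpa using tendsto_rpow_neg_atTop (by linarith : 0 < γ * (d + 1) - 1)
  refine squeeze_zero' ?_ ?_ hpow
  · filter_upwards [eventually_gt_atTop 0] with t ht
    positivity
  filter_upwards [eventually_gt_atTop 0] with t ht
  have hγt := rpow_pos_of_pos ht γ
  calc t / (⌈t ^ γ⌉₊ : ℝ) ^ (d + 1) ≤ t / (t ^ γ) ^ (d + 1) := by gcongr; exact Nat.le_ceil _
    _ = t ^ (1 - γ * (d + 1)) := by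
      rw [← rpow_natCast, ← rpow_mul ht.le, rpow_sub ht, rpow_one]
      push_cast
      ring_nf

lemma tendsto_natFloor_rpow_add_pow_div {d : ℕ} (hβd : β * d < 1) {c : ℝ} (hc : 0 ≤ c) :
    Tendsto (fun t : ℝ => ((⌊t ^ β⌋₊ : ℝ) + c) ^ (d + 1) / (t * ⌊t ^ β⌋₊)) atTop (𝓝 0) := by
  have hpow : Tendsto (fun t : ℝ => (1 + c) ^ (d + 1) * t ^ (β * d - 1)) atTop (𝓝 0) := by
    simpa using (tendsto_rpow_neg_atTop (by linarith : 0 < 1 - β * d)).const_mul ((1 + c) ^ (d + 1))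
  refine squeeze_zero' ?_ ?_ hpow
  · filter_upwards [eventually_gt_atTop 0] with t ht
    positivity
  filter_upwards [eventually_gt_atTop 0] with t ht
  rcases Nat.eq_zero_or_pos ⌊t ^ β⌋₊ with hN | hN
  · rw [hN, Nat.cast_zero, mul_zero, div_zero]
    positivity
  have hN₁ : (1 : ℝ) ≤ ⌊t ^ β⌋₊ := Nat.one_le_cast.2 hN
  have hNβ : (⌊t ^ β⌋₊ : ℝ) ≤ t ^ β := Nat.floor_le (rpow_nonneg ht.le β)
  calc ((⌊t ^ β⌋₊ : ℝ) + c) ^ (d + 1) / (t * ⌊t ^ β⌋₊)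
      ≤ ((1 + c) * ⌊t ^ β⌋₊) ^ (d + 1) / (t * ⌊t ^ β⌋₊) := by gcongr; nlinarith
    _ = (1 + c) ^ (d + 1) * ((⌊t ^ β⌋₊ : ℝ) ^ d / t) := by
      rw [mul_pow, pow_succ (⌊t ^ β⌋₊ : ℝ) d]
      field_simp
    _ ≤ (1 + c) ^ (d + 1) * ((t ^ β) ^ d / t) := by gcongr
    _ = (1 + c) ^ (d + 1) * t ^ (β * d - 1) := by
      rw [← rpow_natCast (t ^ β) d, ← rpow_mul ht.le, rpow_sub_one ht.ne']

end Asymptotics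

section Averages

open Complex (I exp)

variable {d : ℕ} {β : ℝ}

lemma exists_exponent_between (hβ : 1 / ((d : ℝ) + 1) < β) :
    ∃ γ, 0 < γ ∧ γ < β ∧ 1 < γ * (d + 1) := by
  obtain ⟨γ, hγ, hγβ⟩ := exists_between hβ
  exact ⟨γ, (by positivity : (0 : ℝ) < 1 / (d + 1)).trans hγ, hγβ,
    by rwa [div_lt_iff₀ (by positivity)] at hγ⟩

theorem tendsto_avg_exp_mul_fd (hβ : 1 / ((d : ℝ) + 1) < β) (hβd : β * d < 1) {ℓ : ℝ}
    (hℓ : 0 < ℓ) :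
    Tendsto (fun t : ℝ => (⌊t ^ β⌋₊ : ℂ)⁻¹ *
      ∑ n ∈ Icc 1 ⌊t ^ β⌋₊, exp (I * ↑(ℓ * t * fd d n))) atTop (𝓝 0) := by
  obtain ⟨γ, hγ, hγβ, hγd⟩ := exists_exponent_between hβ
  set C := 3 * π / (2 * ℓ * d !)
  have hbound := (tendsto_natCeil_rpow_div_natFloor_rpow hγ hγβ).add
    ((tendsto_natFloor_rpow_add_pow_div hβd (c := d + 3) (by positivity)).const_mul C)
  rw [mul_zero, add_zero] at hbound
  have hsmall := (tendsto_div_natCeil_rpow_pow hγd).const_mul (ℓ * d !)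
  rw [mul_zero] at hsmall
  refine squeeze_zero_norm' ?_ hbound
  filter_upwards [eventually_one_le_natCeil_rpow_le_natFloor_rpow hγ hγβ,
    hsmall.eventually_le_const pi_pos, eventually_gt_atTop 0] with t ⟨hA, hAN⟩ hπ ht
  set A := ⌈t ^ γ⌉₊
  set N := ⌊t ^ β⌋₊
  have hN₀ : (0 : ℝ) < N := Nat.cast_pos.2 (by omega)
  have htail := norm_sum_Icc_exp_mul_fd_le d (by positivity : 0 < ℓ * t) (N := N) hA (by omega)
    (le_of_eq_of_le (by ring) hπ)
  have hsum := (norm_sum_Icc_one_le_add (fun n => (Complex.norm_exp_I_mul_ofReal _).le)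
    (N := N) hA (by omega)).trans (add_le_add le_rfl htail)
  rw [norm_mul, norm_inv, Complex.norm_natCast]
  calc (N : ℝ)⁻¹ * ‖∑ n ∈ Icc 1 N, exp (I * ↑(ℓ * t * fd d n))‖
      ≤ (N : ℝ)⁻¹ * (1 * A + 3 * π * (N + d + 3) ^ (d + 1) / (2 * (ℓ * t) * d !)) := by gcongr
    _ = A / N + C * ((N + (d + 3)) ^ (d + 1) / (t * N)) := by
      simp only [C]
      field_simp
      ring

theorem tendsto_avg_exp_mul_fd_succ (hβ : 1 / ((d : ℝ) + 1) < β) :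
    Tendsto (fun t : ℝ => (⌊t ^ β⌋₊ : ℂ)⁻¹ *
      ∑ n ∈ Icc 1 ⌊t ^ β⌋₊, exp (I * ↑(t * fd (d + 1) n))) atTop (𝓝 1) := by
  obtain ⟨γ, hγ, hγβ, hγd⟩ := exists_exponent_between hβ
  have hbound := ((tendsto_natCeil_rpow_div_natFloor_rpow hγ hγβ).const_mul 2).add
    ((tendsto_div_natCeil_rpow_pow hγd).const_mul (d ! : ℝ))
  rw [mul_zero, mul_zero, add_zero] at hbound
  rw [← tendsto_sub_nhds_zero_iff]
  refine squeeze_zero_norm' ?_ hbound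
  filter_upwards [eventually_one_le_natCeil_rpow_le_natFloor_rpow hγ hγβ,
    eventually_gt_atTop 0] with t ⟨hA, hAN⟩ ht
  set A := ⌈t ^ γ⌉₊
  set N := ⌊t ^ β⌋₊
  have hN₀ : (0 : ℝ) < N := Nat.cast_pos.2 (by omega)
  have hterm : ∀ n : ℕ, ‖exp (I * ↑(t * fd (d + 1) n)) - 1‖ ≤ 2 := fun n =>
    (norm_sub_le _ _).trans (by rw [Complex.norm_exp_I_mul_ofReal, norm_one]; norm_num)
  have hsum := (norm_sum_Icc_one_le_add hterm (N := N) hA (by omega)).trans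
    (add_le_add le_rfl (norm_sum_Icc_exp_mul_fd_succ_sub_one_le d ht.le hA))
  have hcenter : (N : ℂ)⁻¹ * ∑ n ∈ Icc 1 N, exp (I * ↑(t * fd (d + 1) n)) - 1
      = (N : ℂ)⁻¹ * ∑ n ∈ Icc 1 N, (exp (I * ↑(t * fd (d + 1) n)) - 1) := by
    rw [sum_sub_distrib, sum_const, Nat.card_Icc, Nat.add_sub_cancel, nsmul_one, mul_sub,
      inv_mul_cancel₀ (by exact_mod_cast hN₀.ne')]
  rw [hcenter, norm_mul, norm_inv, Complex.norm_natCast]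
  calc (N : ℝ)⁻¹ * ‖∑ n ∈ Icc 1 N, (exp (I * ↑(t * fd (d + 1) n)) - 1)‖
      ≤ (N : ℝ)⁻¹ * (2 * A + N * (t * (d ! / A ^ (d + 1)))) := by gcongr
    _ = 2 * (A / N) + d ! * (t / A ^ (d + 1)) := by field_simp

end Averages

theorem exponential_sum_asymptotics_general (s : ℕ → ℕ) (hs : StrictMono s)
    (d : ℕ) (β : ℝ)
    (hβ : (d = 0 ∧ 1 < β ∧ β < 2) ∨
          (1 ≤ d ∧ 1 / ((d : ℝ) + 1) < β ∧ β < 1 / (d : ℝ)))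
    (N : ℕ → ℕ) (hN : ∀ m, 1 ≤ m → N m = ⌊(s (m + 1) : ℝ) ^ β⌋₊) :
    (∀ ℓ : ℕ, 1 ≤ ℓ → Filter.Tendsto
        (fun m => (N m : ℂ)⁻¹ * ∑ n ∈ Finset.Icc 1 (N m),
          Complex.exp (Complex.I * (ℓ : ℂ) * (s (m + 1) : ℂ) * (fd d n : ℂ)))
        atTop (𝓝 0)) ∧
      Filter.Tendsto
        (fun m => (N m : ℂ)⁻¹ * ∑ n ∈ Finset.Icc 1 (N m),
          Complex.exp (Complex.I * (s (m + 1) : ℂ) * (fd (d + 1) n : ℂ)))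
        atTop (𝓝 1) := by
  have hβ' : 1 / ((d : ℝ) + 1) < β ∧ β * d < 1 := by
    rcases hβ with ⟨rfl, h₁, -⟩ | ⟨hd, h₁, h₂⟩
    · norm_num [h₁]
    · exact ⟨h₁, by rwa [lt_div_iff₀ (by exact_mod_cast hd)] at h₂⟩
  have hσ : Tendsto (fun m => (s (m + 1) : ℝ)) atTop atTop :=
    tendsto_natCast_atTop_atTop.comp (hs.tendsto_atTop.comp (tendsto_add_atTop_nat 1))
  have hNσ : ∀ᶠ m in atTop, N m = ⌊(s (m + 1) : ℝ) ^ β⌋₊ := eventually_atTop.2 ⟨1, hN⟩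
  refine ⟨fun ℓ hℓ => ?_, ?_⟩
  · refine ((tendsto_avg_exp_mul_fd hβ'.1 hβ'.2 (ℓ := ℓ) (by positivity)).comp hσ).congr' ?_
    filter_upwards [hNσ] with m hm
    simp [hm, mul_assoc]
  · refine ((tendsto_avg_exp_mul_fd_succ hβ'.1).comp hσ).congr' ?_
    filter_upwards [hNσ] with m hm
    simp [hm, mul_assoc]

/-- Let `(s_m)` be an increasing sequence of positive integers, `d ≥ 0` fixed, and `β` with
`1/(d+1) < β < 1/d` (resp. `1 < β < 2` when `d = 0`). Put `N_m = ⌊s_{m+1}^β⌋`. Then (i) for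
every `ℓ ≥ 1`, `(1/N_m) Σ_{1 ≤ n ≤ N_m} e^{i ℓ s_{m+1} f_d(n)} → 0`, and (ii)
`(1/N_m) Σ_{1 ≤ n ≤ N_m} e^{i s_{m+1} f_{d+1}(n)} → 1` as `m → ∞`. -/
theorem exponential_sum_asymptotics (s : ℕ → ℕ) (hs : StrictMono s) (hspos : ∀ m, 1 ≤ s m)
    (d : ℕ) (β : ℝ)
    (hβ : (d = 0 ∧ 1 < β ∧ β < 2) ∨
          (1 ≤ d ∧ 1 / ((d : ℝ) + 1) < β ∧ β < 1 / (d : ℝ)))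
    (N : ℕ → ℕ) (hN : ∀ m, 1 ≤ m → N m = ⌊(s (m + 1) : ℝ) ^ β⌋₊) :
    (∀ ℓ : ℕ, 1 ≤ ℓ → Filter.Tendsto
        (fun m => (N m : ℂ)⁻¹ * ∑ n ∈ Finset.Icc 1 (N m),
          Complex.exp (Complex.I * (ℓ : ℂ) * (s (m + 1) : ℂ) * (fd d n : ℂ)))
        atTop (𝓝 0)) ∧
      Filter.Tendsto
        (fun m => (N m : ℂ)⁻¹ * ∑ n ∈ Finset.Icc 1 (N m),
          Complex.exp (Complex.I * (s (m + 1) : ℂ) * (fd (d + 1) n : ℂ)))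
        atTop (𝓝 1) :=
  exponential_sum_asymptotics_general s hs d β hβ N hN
end
end

section
/- Let u : ℕ → 𝔻 be a bounded arithmetic function with liminf_{ℓ→∞} (1/ℓ) Σ_{1 ≤ j ≤ ℓ} |u(j)| = α > 0. Assume that u admits the identity as a Furstenberg system, i.e., there exists ν ∈ V(u) with Z_0 ∘ S = Z_0 ν-almost everywhere. Then u does not have zero mean on typical short intervals: it is not the case that for all sequences (M_k), (H_k) of positive integers with M_k → ∞, H_k → ∞ and H_k/M_k → 0, one has (1/M_k) Σ_{1 ≤ m ≤ M_k} | (1/H_k) Σ_{0 ≤ h < H_k} u(m+h) | → 0. -/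
open MeasureTheory Filter Topology

noncomputable section

/-- `ν ∈ V(u)`: `ν` is a weak* limit of a subsequence of the empirical measures
`E_N(u) = (1/N) Σ_{0 ≤ n < N} δ_{S^n u}`. -/
def memV (u : ℕ → ℂ) (ν : Measure (ℕ → ℂ)) : Prop :=
  ∃ N : ℕ → ℕ, StrictMono N ∧ (∀ m, 1 ≤ N m) ∧
    ∀ f : BoundedContinuousFunction (ℕ → ℂ) ℝ,
      Filter.Tendsto (fun m => (N m : ℝ)⁻¹ * ∑ n ∈ Finset.range (N m), f (shift^[n] (pt u)))
        atTop (𝓝 (∫ y, f y ∂ν))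

/-!
Any `ν ∈ V(u)` is shift-invariant, so the a.e. identity `y 1 = y 0` propagates to
`y (n + 1) = y n` for every `n`: `ν`-almost every point is a constant sequence. Hence the truncated
norm of the average of the first `H` coordinates has the same `ν`-integral `β` for every `H ≥ 1`,
and testing `H = 1` along the defining subsequence gives `β ≥ α > 0`. For `H = k + 1` pick a length
`M_k ≥ (k + 1)²` from that subsequence at which the empirical average of this test function exceeds
`α / 2`; then `H_k = o(M_k)` while the short-interval means stay above `α / 2`.
-/

open Finset BoundedContinuousFunction

def empiricalMean (u : ℕ → ℂ) (N : ℕ) (f : (ℕ → ℂ) →ᵇ ℝ) : ℝ :=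
  (N : ℝ)⁻¹ * ∑ n ∈ range N, f (shift^[n] (pt u))

def shortIntervalMean (u : ℕ → ℂ) (M H : ℕ) : ℝ :=
  (M : ℝ)⁻¹ * ∑ m ∈ Icc 1 M, ‖(H : ℂ)⁻¹ * ∑ h ∈ range H, u (m + h)‖

lemma continuous_shift : Continuous shift := continuous_pi fun n => continuous_apply (n + 1)

lemma shift_iterate_apply (n : ℕ) (y : ℕ → ℂ) (j : ℕ) : shift^[n] y j = y (j + n) := by
  induction n generalizing y with
  | zero => rfl
  | succ n ih => rw [Function.iterate_succ_apply, ih]; rfl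

lemma sum_Icc_one_eq_sum_range {M : Type*} [AddCommMonoid M] (g : ℕ → M) (N : ℕ) :
    ∑ m ∈ Icc 1 N, g m = ∑ n ∈ range N, g (n + 1) := by
  rw [← Ico_add_one_right_eq_Icc, sum_Ico_eq_sum_range]
  simp [add_comm]

lemma abs_empiricalMean_comp_shift_sub_le (u : ℕ → ℂ) (N : ℕ) (f : (ℕ → ℂ) →ᵇ ℝ) :
    |empiricalMean u N (f.compContinuous ⟨shift, continuous_shift⟩) - empiricalMean u N f| ≤
      2 * ‖f‖ / N := by
  have htelescope : ∑ n ∈ range N, f.compContinuous ⟨shift, continuous_shift⟩ (shift^[n] (pt u))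
      - ∑ n ∈ range N, f (shift^[n] (pt u)) = f (shift^[N] (pt u)) - f (pt u) := by
    rw [← sum_sub_distrib]
    refine (sum_congr rfl fun n _ => ?_).trans (sum_range_sub (fun n => f (shift^[n] (pt u))) N)
    simp only [compContinuous_apply, ContinuousMap.coe_mk, Function.iterate_succ_apply']
  calc _ = (N : ℝ)⁻¹ * |f (shift^[N] (pt u)) - f (pt u)| := by
        rw [empiricalMean, empiricalMean, ← mul_sub, htelescope, abs_mul, abs_inv, Nat.abs_cast]
    _ ≤ (N : ℝ)⁻¹ * (2 * ‖f‖) := by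
        gcongr
        have h₁ := f.norm_coe_le_norm (shift^[N] (pt u))
        have h₂ := f.norm_coe_le_norm (pt u)
        rw [Real.norm_eq_abs] at h₁ h₂
        linarith [abs_sub (f (shift^[N] (pt u))) (f (pt u))]
    _ = 2 * ‖f‖ / N := by rw [inv_mul_eq_div]

namespace memV

variable {u : ℕ → ℂ} {ν : Measure (ℕ → ℂ)}

lemma isProbabilityMeasure (h : memV u ν) : IsProbabilityMeasure ν := by
  obtain ⟨N, -, hN1, hconv⟩ := h
  have hone : ∀ m, empiricalMean u (N m) 1 = 1 := fun m => by
    have : (N m : ℝ) ≠ 0 := by have := hN1 m; positivity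
    simp [empiricalMean, this]
  have hlim : (∫ _, (1 : ℝ) ∂ν) = 1 :=
    tendsto_nhds_unique (hconv 1) (tendsto_const_nhds.congr fun m => (hone m).symm)
  rw [integral_const, smul_eq_mul, mul_one, measureReal_def, ENNReal.toReal_eq_one_iff] at hlim
  exact ⟨hlim⟩

lemma integral_comp_shift (h : memV u ν) (f : (ℕ → ℂ) →ᵇ ℝ) :
    ∫ y, f (shift y) ∂ν = ∫ y, f y ∂ν := by
  obtain ⟨N, hN, -, hconv⟩ := h
  have hdiff : Tendsto (fun m => empiricalMean u (N m) (f.compContinuous ⟨shift, continuous_shift⟩)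
      - empiricalMean u (N m) f) atTop (𝓝 0) :=
    squeeze_zero_norm (fun m => abs_empiricalMean_comp_shift_sub_le u (N m) f)
      (tendsto_const_nhds.div_atTop (tendsto_natCast_atTop_atTop.comp hN.tendsto_atTop))
  exact sub_eq_zero.mp (tendsto_nhds_unique ((hconv _).sub (hconv f)) hdiff)

lemma measurePreserving_shift (h : memV u ν) : MeasurePreserving shift ν ν := by
  have := h.isProbabilityMeasure
  refine ⟨continuous_shift.measurable, ext_of_forall_integral_eq_of_IsFiniteMeasure fun f => ?_⟩
  rw [integral_map continuous_shift.aemeasurable f.continuous.aestronglyMeasurable]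
  exact h.integral_comp_shift f

end memV

lemma ae_forall_eq_apply_zero_of_measurePreserving_shift {μ : Measure (ℕ → ℂ)}
    (hμ : MeasurePreserving shift μ μ) (h : ∀ᵐ y ∂μ, y 1 = y 0) :
    ∀ᵐ y ∂μ, ∀ n, y n = y 0 := by
  have hstep : ∀ n, ∀ᵐ y ∂μ, y (n + 1) = y n := fun n => by
    filter_upwards [(hμ.iterate n).quasiMeasurePreserving.ae h] with y hy
    simpa [shift_iterate_apply, add_comm] using hy
  filter_upwards [ae_all_iff.mpr hstep] with y hy n
  induction n with
  | zero => rfl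
  | succ n ih => rw [hy n, ih]

-- `min 1` only makes the function bounded on all of `ℂ^ℕ`; it is invisible on `𝔻^ℕ`.
def truncAvgNorm (H : ℕ) : (ℕ → ℂ) →ᵇ ℝ :=
  ofNormedAddCommGroup (fun y => min 1 ‖(H : ℂ)⁻¹ * ∑ h ∈ range H, y h‖)
    (continuous_const.min
      (continuous_const.mul (continuous_finsetSum _ fun h _ => continuous_apply h)).norm)
    1 (fun y => by
      rw [Real.norm_of_nonneg (le_min zero_le_one (norm_nonneg _))]
      exact min_le_left _ _)

lemma truncAvgNorm_apply (H : ℕ) (y : ℕ → ℂ) :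
    truncAvgNorm H y = min 1 ‖(H : ℂ)⁻¹ * ∑ h ∈ range H, y h‖ := rfl

lemma truncAvgNorm_of_forall_eq {H : ℕ} (hH : H ≠ 0) {y : ℕ → ℂ} (hy : ∀ n, y n = y 0) :
    truncAvgNorm H y = truncAvgNorm 1 y := by
  have hH' : (H : ℂ) ≠ 0 := Nat.cast_ne_zero.mpr hH
  simp [truncAvgNorm_apply, hy _, hH']

lemma truncAvgNorm_shift_iterate_pt (u : ℕ → ℂ) (H n : ℕ) :
    truncAvgNorm H (shift^[n] (pt u)) = min 1 ‖(H : ℂ)⁻¹ * ∑ h ∈ range H, u (n + 1 + h)‖ := by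
  simp only [truncAvgNorm_apply, shift_iterate_apply, pt]
  congr 4 with h
  ring_nf

lemma empiricalMean_truncAvgNorm_le_shortIntervalMean (u : ℕ → ℂ) (M H : ℕ) :
    empiricalMean u M (truncAvgNorm H) ≤ shortIntervalMean u M H := by
  rw [empiricalMean, shortIntervalMean, sum_Icc_one_eq_sum_range]
  gcongr with n
  rw [truncAvgNorm_shift_iterate_pt]
  exact min_le_right _ _

lemma empiricalMean_truncAvgNorm_one {u : ℕ → ℂ} (hu : ∀ n, 1 ≤ n → ‖u n‖ ≤ 1) (N : ℕ) :
    empiricalMean u N (truncAvgNorm 1) = (N : ℝ)⁻¹ * ∑ j ∈ Icc 1 N, ‖u j‖ := by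
  rw [empiricalMean, sum_Icc_one_eq_sum_range]
  refine congrArg _ (sum_congr rfl fun n _ => ?_)
  simp [truncAvgNorm_shift_iterate_pt, hu (n + 1) (Nat.le_add_left 1 n)]

lemma integral_truncAvgNorm {ν : Measure (ℕ → ℂ)} (hae : ∀ᵐ y ∂ν, ∀ n, y n = y 0) {H : ℕ}
    (hH : H ≠ 0) :
    ∫ y, truncAvgNorm H y ∂ν = ∫ y, truncAvgNorm 1 y ∂ν :=
  integral_congr_ae (hae.mono fun _ hy => truncAvgNorm_of_forall_eq hH hy)

lemma tendsto_succ_div_of_sq_le {M : ℕ → ℕ} (hM : ∀ k, (k + 1) ^ 2 ≤ M k) :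
    Tendsto (fun k => ((k + 1 : ℕ) : ℝ) / M k) atTop (𝓝 0) := by
  refine squeeze_zero (fun k => by positivity) (fun k => ?_)
    tendsto_one_div_add_atTop_nhds_zero_nat
  have hk : (0 : ℝ) < k + 1 := by positivity
  have hMk : ((k : ℝ) + 1) ^ 2 ≤ M k := by exact_mod_cast hM k
  rw [div_le_div_iff₀ (by nlinarith) hk]
  push_cast
  nlinarith

namespace memV

variable {u : ℕ → ℂ} {ν : Measure (ℕ → ℂ)}

lemma liminf_le_integral_truncAvgNorm_one (h : memV u ν) (hu : ∀ n, 1 ≤ n → ‖u n‖ ≤ 1) :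
    liminf (fun ℓ : ℕ => (ℓ : ℝ)⁻¹ * ∑ j ∈ Icc 1 ℓ, ‖u j‖) atTop ≤ ∫ y, truncAvgNorm 1 y ∂ν := by
  obtain ⟨N, hN, -, hconv⟩ := h
  have hlim : Tendsto (fun m => empiricalMean u (N m) (truncAvgNorm 1)) atTop _ :=
    hconv (truncAvgNorm 1)
  simp only [empiricalMean_truncAvgNorm_one hu] at hlim
  calc _ ≤ liminf ((fun ℓ : ℕ => (ℓ : ℝ)⁻¹ * ∑ j ∈ Icc 1 ℓ, ‖u j‖) ∘ N) atTop :=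
        hN.tendsto_atTop.liminf_le_liminf_comp hlim.isCoboundedUnder_ge
          (isBoundedUnder_of ⟨0, fun ℓ => by positivity⟩)
    _ = _ := hlim.liminf_eq

lemma exists_scales_lt_shortIntervalMean (h : memV u ν)
    (hae : ∀ᵐ y ∂ν, ∀ n, y n = y 0) {c : ℝ} (hc : c < ∫ y, truncAvgNorm 1 y ∂ν) :
    ∃ M H : ℕ → ℕ, Tendsto M atTop atTop ∧ Tendsto H atTop atTop ∧
      Tendsto (fun k => (H k : ℝ) / M k) atTop (𝓝 0) ∧ ∀ k, c < shortIntervalMean u (M k) (H k) := by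
  obtain ⟨N, hN, -, hconv⟩ := h
  have hscale : ∀ k, ∃ m, (k + 1) ^ 2 ≤ N m ∧ c < empiricalMean u (N m) (truncAvgNorm (k + 1)) :=
    fun k => ((hN.tendsto_atTop.eventually_ge_atTop _).and ((hconv _).eventually
      (eventually_gt_nhds (by rwa [integral_truncAvgNorm hae k.succ_ne_zero])))).exists
  choose m hmN hmc using hscale
  refine ⟨fun k => N (m k), fun k => k + 1, ?_, tendsto_add_atTop_nat 1,
    tendsto_succ_div_of_sq_le hmN,
    fun k => (hmc k).trans_le (empiricalMean_truncAvgNorm_le_shortIntervalMean u _ _)⟩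
  exact tendsto_atTop_mono (fun k => k.le_succ.trans ((Nat.le_self_pow two_ne_zero _).trans
    (hmN k))) tendsto_id

end memV

/-- If `u : ℕ → 𝔻` satisfies `liminf_ℓ (1/ℓ) Σ_{j ≤ ℓ} |u(j)| = α > 0` and some Furstenberg
system of `u` is the identity (some `ν ∈ V(u)` satisfies `Z_0 ∘ S = Z_0` ν-a.e.), then `u`
does not have zero mean on typical short intervals. -/
theorem no_zero_mean_on_short_intervals (u : ℕ → ℂ) (hu : ∀ n, 1 ≤ n → ‖u n‖ ≤ 1) (α : ℝ)
    (hα : 0 < α)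
    (hliminf : Filter.liminf
      (fun ℓ : ℕ => (ℓ : ℝ)⁻¹ * ∑ j ∈ Finset.Icc 1 ℓ, ‖u j‖) atTop = α)
    (hid : ∃ ν : Measure (ℕ → ℂ), memV u ν ∧ ∀ᵐ y ∂ν, y 1 = y 0) :
    ¬ (∀ M H : ℕ → ℕ, Filter.Tendsto M atTop atTop → Filter.Tendsto H atTop atTop →
        Filter.Tendsto (fun k => (H k : ℝ) / (M k : ℝ)) atTop (𝓝 0) →
        Filter.Tendsto
          (fun k => (M k : ℝ)⁻¹ * ∑ m ∈ Finset.Icc 1 (M k),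
            ‖(H k : ℂ)⁻¹ * ∑ h ∈ Finset.range (H k), u (m + h)‖)
          atTop (𝓝 0)) := by
  obtain ⟨ν, hν, hae⟩ := hid
  have hconst := ae_forall_eq_apply_zero_of_measurePreserving_shift hν.measurePreserving_shift hae
  have hαle : α ≤ ∫ y, truncAvgNorm 1 y ∂ν := hliminf ▸ hν.liminf_le_integral_truncAvgNorm_one hu
  obtain ⟨M, H, hM, hH, hHM, hlower⟩ :=
    hν.exists_scales_lt_shortIntervalMean hconst (c := α / 2) (by linarith)
  intro hzero
  have hnonpos : α / 2 ≤ 0 :=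
    ge_of_tendsto (hzero M H hM hH hHM) (Eventually.of_forall fun k => (hlower k).le)
  linarith
end
end
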